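/- Let G be a graph of bounded degree whose isoperimetric profile satisfies C₁/n^β ≤ Λ(n) ≤ C₂/n^β for all sufficiently large n, with constants C₁, C₂, β > 0. Then there exists a constant A > 0 such that for all sufficiently large n, Sep(n)/n ≥ A·Λ(n); in particular Sep(n) ≥ A'·n^{1−β} for some A' > 0. -/

import Mathlib

/-!
Let `σ = 1 - β / 2` and, for large `M`, let `F` minimize `|∂A| / |A| ^ σ` over `|A| ≤ M`. The
minimum is at most `Λ(M) M ^ (1 - σ) ≲ M ^ (-β / 2)` and at least `Λ(|F|) |F| ^ (1 - σ) ≳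
|F| ^ (-β / 2)`, so `|F| ≳ M`. Splitting `F` into `B` and `F \ B` with `|B| ≤ |F \ B|`,
minimality and the concavity bound `(a + b) ^ σ ≤ b ^ σ + σ a ^ σ` give
`|∂_F B| / |B| ≥ (1 - σ) / 2 · |∂F| / |F|`. Hence
`Sep(M) ≥ |F| h(F) ≥ β / 4 · |∂F| ≳ |F| ^ (1 - β) ≳ M ^ (1 - β)`, and `Λ(M) ≲ M ^ (-β)` turns this
into `Sep(M) / M ≳ Λ(M)`.
-/

open Set Filter

namespace SepProfile

variable {V : Type*}

/-- Edge boundary of a vertex set: pairs (a,b) with a ∈ A, b ∉ A, a ~ b. -/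
def ebd (G : SimpleGraph V) (A : Set V) : Set (V × V) :=
  {p | G.Adj p.1 p.2 ∧ p.1 ∈ A ∧ p.2 ∉ A}

/-- Isoperimetric ratio |∂A|/|A|. -/
noncomputable def ratio (G : SimpleGraph V) (A : Set V) : ℝ :=
  ((ebd G A).ncard : ℝ) / (A.ncard : ℝ)

/-- Isoperimetric profile Λ(n). -/
noncomputable def isop (G : SimpleGraph V) (n : ℕ) : ℝ :=
  sInf {x | ∃ A : Set V, A.Finite ∧ A.Nonempty ∧ A.ncard ≤ n ∧ x = ratio G A}

/-- Boundary of A within F (edges of the induced subgraph on F leaving A). -/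
def inbd (G : SimpleGraph V) (F A : Set V) : Set (V × V) :=
  {p | G.Adj p.1 p.2 ∧ p.1 ∈ A ∧ p.2 ∈ F \ A}

/-- Cheeger constant of the subgraph induced on F. -/
noncomputable def cheeger (G : SimpleGraph V) (F : Set V) : ℝ :=
  sInf {x | ∃ A : Set V, A ⊆ F ∧ A.Nonempty ∧ 2 * A.ncard ≤ F.ncard ∧
    x = ((inbd G F A).ncard : ℝ) / (A.ncard : ℝ)}

/-- Separation profile Sep(n) = sup_{|F| ≤ n} |F|·h(F). -/
noncomputable def sep (G : SimpleGraph V) (n : ℕ) : ℝ :=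
  sSup {x | ∃ F : Set V, F.Finite ∧ F.ncard ≤ n ∧ x = (F.ncard : ℝ) * cheeger G F}

/-- A finite set is optimal if it realizes the isoperimetric profile. -/
def Optimal (G : SimpleGraph V) (F : Set V) : Prop :=
  F.Finite ∧ F.Nonempty ∧ ratio G F = isop G F.ncard

/-- An integer is optimal if some optimal set has that cardinality. -/
def OptimalInt (G : SimpleGraph V) (n : ℕ) : Prop :=
  ∃ F : Set V, Optimal G F ∧ F.ncard = n

/-- Ball of radius n around v for the graph metric. -/
def ball (G : SimpleGraph V) (v : V) (n : ℕ) : Set V :=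
  {u | G.Reachable v u ∧ G.dist v u ≤ n}

/-- All degrees bounded by D. -/
def DegLE (G : SimpleGraph V) (D : ℕ) : Prop :=
  ∀ v, (G.neighborSet v).ncard ≤ D

/-- Amenability: the isoperimetric profile tends to 0. -/
def Amenable (G : SimpleGraph V) : Prop :=
  Tendsto (fun n => isop G n) atTop (nhds 0)

/-- F together with its outer vertex neighbourhood. -/
def nbh (G : SimpleGraph V) (F : Set V) : Set V :=
  F ∪ {b | ∃ a ∈ F, G.Adj a b}

/-- Partial self-isomorphisms: every finite F has a disjoint isomorphic copy
(together with its boundary neighbourhood). -/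
def HasPSI (G : SimpleGraph V) : Prop :=
  ∀ F : Set V, F.Finite →
    ∃ F' : Set V, F'.Finite ∧ Disjoint F F' ∧
      ∃ e : G.induce (nbh G F) ≃g G.induce (nbh G F'),
        ∀ x : nbh G F, (x : V) ∈ F ↔ ((e x : V) ∈ F')

/-- δ-geometric decay function p_f^δ(x) = inf {y > 0 : f(y) ≤ δ·f(x)}. -/
noncomputable def gdecay (f : ℝ → ℝ) (δ x : ℝ) : ℝ :=
  sInf {y | 0 < y ∧ f y ≤ δ * f x}

end SepProfile

namespace SepProfile

open Real

variable {V : Type*} {G : SimpleGraph V}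

noncomputable def weightedRatio (G : SimpleGraph V) (σ : ℝ) (A : Set V) : ℝ :=
  ((ebd G A).ncard : ℝ) / (A.ncard : ℝ) ^ σ

lemma ratio_nonneg (G : SimpleGraph V) (A : Set V) : 0 ≤ ratio G A := by
  unfold ratio; positivity

lemma weightedRatio_nonneg (G : SimpleGraph V) (σ : ℝ) (A : Set V) :
    0 ≤ weightedRatio G σ A := by
  unfold weightedRatio; positivity

lemma weightedRatio_eq_ratio_mul {A : Set V} (hA : 0 < A.ncard) (σ : ℝ) :
    weightedRatio G σ A = ratio G A * (A.ncard : ℝ) ^ (1 - σ) := by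
  have ha : (0 : ℝ) < A.ncard := by exact_mod_cast hA
  rw [weightedRatio, ratio, rpow_sub ha, rpow_one]
  field_simp

lemma one_le_ncard_ebd_of_ratio_pos {A : Set V} (h : 0 < ratio G A) :
    1 ≤ (ebd G A).ncard := by
  by_contra! h0
  simp [ratio, Nat.lt_one_iff.1 h0] at h

lemma ratio_pos_of_forall_div_rpow_le {c β : ℝ} (hc : 0 < c)
    (hlow : ∀ A : Set V, A.Finite → A.Nonempty → c / (A.ncard : ℝ) ^ β ≤ ratio G A)
    {A : Set V} (hA : A.Finite) (hne : A.Nonempty) : 0 < ratio G A :=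
  (div_pos hc (rpow_pos_of_pos (by exact_mod_cast (Set.ncard_pos hA).2 hne) β)).trans_le
    (hlow A hA hne)

lemma ebd_finite_of_ratio_pos {A : Set V} (h : 0 < ratio G A) : (ebd G A).Finite :=
  Set.finite_of_ncard_pos (one_le_ncard_ebd_of_ratio_pos h)

lemma isop_le_ratio {A : Set V} (hA : A.Finite) (hne : A.Nonempty) {n : ℕ}
    (h : A.ncard ≤ n) : isop G n ≤ ratio G A :=
  csInf_le ⟨0, by rintro _ ⟨B, -, -, -, rfl⟩; exact ratio_nonneg G B⟩ ⟨A, hA, hne, h, rfl⟩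

lemma le_isop [Nonempty V] {n : ℕ} (hn : 1 ≤ n) {x : ℝ}
    (h : ∀ A : Set V, A.Finite → A.Nonempty → A.ncard ≤ n → x ≤ ratio G A) :
    x ≤ isop G n := by
  obtain ⟨v⟩ := ‹Nonempty V›
  refine le_csInf ⟨_, {v}, Set.finite_singleton v, Set.singleton_nonempty v, ?_, rfl⟩ ?_
  · rwa [Set.ncard_singleton]
  · rintro _ ⟨A, hA, hne, hAn, rfl⟩
    exact h A hA hne hAn

lemma nonempty_of_isop_pos {n : ℕ} (h : 0 < isop G n) : Nonempty V := by
  by_contra hV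
  rw [not_nonempty_iff] at hV
  simp [isop, Set.eq_empty_of_isEmpty] at h

lemma inv_le_isop [Nonempty V] (hbd : ∀ A : Set V, A.Finite → A.Nonempty → 1 ≤ (ebd G A).ncard)
    {n : ℕ} (hn : 1 ≤ n) : (n : ℝ)⁻¹ ≤ isop G n := by
  refine le_isop hn fun A hA hne hAn => ?_
  rw [ratio, inv_eq_one_div]
  have ha : 0 < A.ncard := (Set.ncard_pos hA).2 hne
  exact div_le_div₀ (by positivity) (by exact_mod_cast hbd A hA hne) (by exact_mod_cast ha)
    (by exact_mod_cast hAn)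

lemma cheeger_nonneg (G : SimpleGraph V) (F : Set V) : 0 ≤ cheeger G F :=
  Real.sInf_nonneg (by rintro _ ⟨A, -, -, -, rfl⟩; positivity)

lemma cheeger_le_ncard {F : Set V} (hF : F.Finite) : cheeger G F ≤ F.ncard := by
  rcases Set.eq_empty_or_nonempty {x | ∃ A : Set V, A ⊆ F ∧ A.Nonempty ∧ 2 * A.ncard ≤ F.ncard ∧
      x = ((inbd G F A).ncard : ℝ) / (A.ncard : ℝ)} with h | ⟨x, A, hAF, hne, h2, rfl⟩
  · rw [cheeger, h, Real.sInf_empty]; positivity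
  have ha : (0 : ℝ) < A.ncard := by exact_mod_cast (Set.ncard_pos (hF.subset hAF)).2 hne
  have hsub : inbd G F A ⊆ A ×ˢ F := fun p hp => ⟨hp.2.1, hp.2.2.1⟩
  have hcard : ((inbd G F A).ncard : ℝ) ≤ A.ncard * F.ncard := by
    exact_mod_cast (Set.ncard_le_ncard hsub ((hF.subset hAF).prod hF)).trans Set.ncard_prod.le
  calc cheeger G F ≤ ((inbd G F A).ncard : ℝ) / A.ncard :=
        csInf_le ⟨0, by rintro _ ⟨B, -, -, -, rfl⟩; positivity⟩ ⟨A, hAF, hne, h2, rfl⟩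
    _ ≤ F.ncard := by rw [div_le_iff₀ ha]; linarith

lemma le_sep {F : Set V} (hF : F.Finite) {n : ℕ} (hn : F.ncard ≤ n) :
    F.ncard * cheeger G F ≤ sep G n := by
  refine le_csSup ⟨n * n, ?_⟩ ⟨F, hF, hn, rfl⟩
  rintro _ ⟨E, hE, hEn, rfl⟩
  have hEn' : (E.ncard : ℝ) ≤ n := by exact_mod_cast hEn
  exact mul_le_mul hEn' ((cheeger_le_ncard hE).trans hEn') (cheeger_nonneg G E) (by positivity)

/-- Splitting `F` into `A` and `F \ A`: each edge between the two parts is counted once from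
either side, and each edge leaving `F` once. -/
lemma ncard_ebd_add_ncard_ebd_diff {F A : Set V} (hAF : A ⊆ F)
    (hA : (ebd G A).Finite) (hA' : (ebd G (F \ A)).Finite) :
    (ebd G A).ncard + (ebd G (F \ A)).ncard = 2 * (inbd G F A).ncard + (ebd G F).ncard := by
  set X : Set (V × V) := {p | G.Adj p.1 p.2 ∧ p.1 ∈ A ∧ p.2 ∉ F}
  set Y : Set (V × V) := {p | G.Adj p.1 p.2 ∧ p.1 ∈ F \ A ∧ p.2 ∉ F}
  set I := inbd G F A
  have hA_eq : ebd G A = I ∪ X := by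
    ext p
    simp only [ebd, I, inbd, X, Set.mem_ofPred_eq, Set.mem_union, Set.mem_sdiff]
    tauto
  have hA'_eq : ebd G (F \ A) = Y ∪ Prod.swap '' I := by
    ext ⟨u, w⟩
    have := @hAF w
    simp only [ebd, I, inbd, Y, Set.image_swap_eq_preimage_swap, Set.mem_ofPred_eq,
      Set.mem_union, Set.mem_sdiff, Set.mem_preimage, Prod.swap_prod_mk, G.adj_comm w u]
    tauto
  have hF_eq : ebd G F = X ∪ Y := by
    ext ⟨u, w⟩
    have := @hAF u
    simp only [ebd, X, Y, Set.mem_ofPred_eq, Set.mem_union, Set.mem_sdiff]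
    tauto
  have hIX : Disjoint I X := Set.disjoint_left.2 fun _ hI hX => hX.2.2 hI.2.2.1
  have hYI : Disjoint Y (Prod.swap '' I) :=
    Set.disjoint_left.2 fun _ hY ⟨_, hI, hp⟩ => hY.2.2 (hp ▸ hAF hI.2.1)
  have hXY : Disjoint X Y := Set.disjoint_left.2 fun _ hX hY => hY.2.1.2 hX.2.1
  rw [hA_eq] at hA ⊢
  rw [hA'_eq] at hA' ⊢
  rw [hF_eq, Set.ncard_union_eq hIX (hA.subset Set.subset_union_left)
    (hA.subset Set.subset_union_right), Set.ncard_union_eq hYI (hA'.subset Set.subset_union_left)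
    (hA'.subset Set.subset_union_right), Set.ncard_union_eq hXY
    (hA.subset Set.subset_union_right) (hA'.subset Set.subset_union_left),
    Set.ncard_image_of_injective _ Prod.swap_injective]
  ring

lemma add_rpow_le_rpow_add_mul_rpow {σ x y : ℝ} (hx : 0 < x) (hxy : x ≤ y)
    (hσ0 : 0 ≤ σ) (hσ1 : σ ≤ 1) : (x + y) ^ σ ≤ y ^ σ + σ * x ^ σ := by
  have hy : 0 < y := hx.trans_le hxy
  calc (x + y) ^ σ = y ^ σ * (1 + x / y) ^ σ := by
        rw [← mul_rpow hy.le (by positivity), mul_add, mul_one, mul_div_cancel₀ _ hy.ne', add_comm]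
    _ ≤ y ^ σ * (1 + σ * (x / y)) := by
        gcongr
        have hxy' : -1 ≤ x / y := by linarith [div_nonneg hx.le hy.le]
        exact rpow_one_add_le_one_add_mul_self hxy' hσ0 hσ1
    _ = y ^ σ + σ * x * y ^ (σ - 1) := by rw [rpow_sub_one hy.ne']; field_simp
    _ ≤ y ^ σ + σ * x * x ^ (σ - 1) := by
        gcongr y ^ σ + ?_
        exact mul_le_mul_of_nonneg_left (rpow_le_rpow_of_nonpos hx hxy (by linarith))
          (by positivity)
    _ = y ^ σ + σ * x ^ σ := by rw [rpow_sub_one hx.ne']; field_simp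

/-- The infimum is attained because `|∂A| ≤ |A|^σ · weightedRatio G σ {v}` leaves only finitely
many candidate values below that of a singleton. -/
lemma exists_weightedRatio_le [Nonempty V] (G : SimpleGraph V) {σ : ℝ} (hσ : σ ≤ 1) {M : ℕ}
    (hM : 1 ≤ M) :
    ∃ F : Set V, F.Finite ∧ F.Nonempty ∧ F.ncard ≤ M ∧ ∀ A : Set V, A.Finite → A.Nonempty →
      A.ncard ≤ M → weightedRatio G σ F ≤ weightedRatio G σ A := by
  obtain ⟨v⟩ := ‹Nonempty V›
  set s := weightedRatio G σ {v}
  set I := {A : Set V | A.Finite ∧ A.Nonempty ∧ A.ncard ≤ M ∧ weightedRatio G σ A ≤ s}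
  have hv : {v} ∈ I := ⟨Set.finite_singleton v, Set.singleton_nonempty v, by simpa using hM, le_rfl⟩
  have hfin : (weightedRatio G σ '' I).Finite := by
    refine (((Set.finite_Iic ⌊s * M⌋₊).prod (Set.finite_Iic M)).image
      fun p : ℕ × ℕ => (p.1 : ℝ) / (p.2 : ℝ) ^ σ).subset ?_
    rintro _ ⟨A, ⟨hA, hne, hAM, hAs⟩, rfl⟩
    refine ⟨((ebd G A).ncard, A.ncard), ⟨Nat.le_floor ?_, hAM⟩, rfl⟩
    have ha : (1 : ℝ) ≤ A.ncard := by exact_mod_cast (Set.ncard_pos hA).2 hne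
    have hpow : (A.ncard : ℝ) ^ σ ≤ M :=
      (rpow_le_rpow_of_exponent_le ha hσ).trans (by rw [rpow_one]; exact_mod_cast hAM)
    rw [weightedRatio, div_le_iff₀ (by positivity)] at hAs
    exact hAs.trans (mul_le_mul_of_nonneg_left hpow (weightedRatio_nonneg G σ {v}))
  obtain ⟨F, ⟨hF, hne, hFM, hFs⟩, hmin⟩ := Set.Finite.exists_minimalFor' _ I hfin ⟨_, hv⟩
  refine ⟨F, hF, hne, hFM, fun A hA hAne hAM => ?_⟩
  by_cases hAs : weightedRatio G σ A ≤ s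
  · exact (le_total _ _).elim (hmin ⟨hA, hAne, hAM, hAs⟩) id
  · exact hFs.trans (not_le.1 hAs).le

lemma one_sub_mul_weightedRatio_mul_rpow_le {σ : ℝ} (hσ0 : 0 ≤ σ) (hσ1 : σ ≤ 1) {F : Set V}
    (hmin : ∀ B ⊆ F, B.Nonempty → weightedRatio G σ F ≤ weightedRatio G σ B)
    (hF : F.Finite) {B : Set V} (hBF : B ⊆ F)
    (hB : B.Nonempty) (hB2 : 2 * B.ncard ≤ F.ncard) (hfinB : (ebd G B).Finite)
    (hfinB' : (ebd G (F \ B)).Finite) :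
    (1 - σ) * weightedRatio G σ F * (B.ncard : ℝ) ^ σ ≤ 2 * (inbd G F B).ncard := by
  set μ := weightedRatio G σ F with hμ
  have hBfin := hF.subset hBF
  have hcard : (F \ B).ncard = F.ncard - B.ncard := Set.ncard_sdiff hBF hBfin
  have ha : 0 < B.ncard := (Set.ncard_pos hBfin).2 hB
  have hb : 0 < (F \ B).ncard := by omega
  have hm : (0 : ℝ) < F.ncard := by exact_mod_cast (by omega : 0 < F.ncard)
  have hBF' : (B.ncard : ℝ) + (F \ B).ncard = F.ncard := by
    rw [hcard, Nat.cast_sub (Set.ncard_le_ncard hBF hF)]; ring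
  have hμB : μ * (B.ncard : ℝ) ^ σ ≤ (ebd G B).ncard := by
    rw [← le_div_iff₀ (by positivity)]; exact hmin B hBF hB
  have hμB' : μ * ((F \ B).ncard : ℝ) ^ σ ≤ (ebd G (F \ B)).ncard := by
    rw [← le_div_iff₀ (by positivity)]
    exact hmin _ Set.sdiff_subset (Set.nonempty_of_ncard_ne_zero hb.ne')
  have hμF : (ebd G F).ncard = μ * (F.ncard : ℝ) ^ σ := by
    rw [hμ, weightedRatio, div_mul_cancel₀ _ (rpow_pos_of_pos hm σ).ne']
  have hconc : μ * (F.ncard : ℝ) ^ σ ≤ μ * (((F \ B).ncard : ℝ) ^ σ + σ * (B.ncard : ℝ) ^ σ) := by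
    rw [← hBF']
    exact mul_le_mul_of_nonneg_left (add_rpow_le_rpow_add_mul_rpow (by positivity)
      (by exact_mod_cast (by omega : B.ncard ≤ (F \ B).ncard)) hσ0 hσ1) (weightedRatio_nonneg ..)
  have hsplit : ((ebd G B).ncard : ℝ) + (ebd G (F \ B)).ncard
      = 2 * (inbd G F B).ncard + (ebd G F).ncard := by
    exact_mod_cast ncard_ebd_add_ncard_ebd_diff hBF hfinB hfinB'
  linarith

lemma one_sub_div_two_mul_ncard_ebd_le {σ : ℝ} (hσ0 : 0 ≤ σ) (hσ1 : σ ≤ 1) {F : Set V}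
    (hmin : ∀ B ⊆ F, B.Nonempty → weightedRatio G σ F ≤ weightedRatio G σ B) (hF : F.Finite)
    (hF2 : 2 ≤ F.ncard)
    (hfin : ∀ B ⊆ F, B.Nonempty → (ebd G B).Finite) :
    (1 - σ) / 2 * (ebd G F).ncard ≤ F.ncard * cheeger G F := by
  have hm : (0 : ℝ) < F.ncard := by positivity
  obtain ⟨v, hv⟩ := Set.nonempty_of_ncard_ne_zero (by omega : F.ncard ≠ 0)
  rw [← div_le_iff₀' hm]
  refine le_csInf ⟨_, {v}, Set.singleton_subset_iff.2 hv, Set.singleton_nonempty v,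
    by simpa using hF2, rfl⟩ ?_
  rintro _ ⟨B, hBF, hB, hB2, rfl⟩
  have hBfin := hF.subset hBF
  have ha : (0 : ℝ) < B.ncard := by exact_mod_cast (Set.ncard_pos hBfin).2 hB
  have hdiff : (F \ B).Nonempty := by
    refine Set.nonempty_of_ncard_ne_zero ?_
    rw [Set.ncard_sdiff hBF hBfin]
    have := (Set.ncard_pos hBfin).2 hB
    omega
  have key := one_sub_mul_weightedRatio_mul_rpow_le hσ0 hσ1 hmin hF hBF hB hB2 (hfin B hBF hB)
    (hfin _ Set.sdiff_subset hdiff)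
  have hpow : (F.ncard : ℝ) ^ (σ - 1) ≤ (B.ncard : ℝ) ^ (σ - 1) :=
    rpow_le_rpow_of_nonpos ha (by exact_mod_cast Set.ncard_le_ncard hBF hF) (by linarith)
  rw [rpow_sub_one hm.ne', rpow_sub_one ha.ne'] at hpow
  calc (1 - σ) / 2 * (ebd G F).ncard / F.ncard
      = (1 - σ) / 2 * weightedRatio G σ F * ((F.ncard : ℝ) ^ σ / F.ncard) := by
        rw [weightedRatio]; field_simp
    _ ≤ (1 - σ) / 2 * weightedRatio G σ F * ((B.ncard : ℝ) ^ σ / B.ncard) := by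
        gcongr
        exact mul_nonneg (by linarith) (weightedRatio_nonneg ..)
    _ ≤ (inbd G F B).ncard / B.ncard := by
        rw [mul_div_assoc', div_le_div_iff_of_pos_right ha]
        linarith

lemma weightedRatio_le_isop_mul_rpow [Nonempty V] {σ : ℝ} (hσ : σ ≤ 1) {M : ℕ} (hM : 1 ≤ M)
    {F : Set V} (hmin : ∀ A : Set V, A.Finite → A.Nonempty → A.ncard ≤ M →
      weightedRatio G σ F ≤ weightedRatio G σ A) :
    weightedRatio G σ F ≤ isop G M * (M : ℝ) ^ (1 - σ) := by
  have hMpos : (0 : ℝ) < M := by exact_mod_cast hM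
  rw [← div_le_iff₀ (rpow_pos_of_pos hMpos _)]
  refine le_isop hM fun A hA hne hAM => ?_
  have ha := (Set.ncard_pos hA).2 hne
  rw [div_le_iff₀ (rpow_pos_of_pos hMpos _)]
  calc weightedRatio G σ F ≤ weightedRatio G σ A := hmin A hA hne hAM
    _ = ratio G A * (A.ncard : ℝ) ^ (1 - σ) := weightedRatio_eq_ratio_mul ha σ
    _ ≤ ratio G A * (M : ℝ) ^ (1 - σ) := by
        gcongr
        exact ratio_nonneg G A

/-- Sets below the threshold `n₀` are handled by `isop G n₀`, which loses the factor `n₀ ^ β`. -/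
lemma div_rpow_div_rpow_le_ratio {c β : ℝ} (hc : 0 ≤ c) (hβ : 0 ≤ β) {n₀ : ℕ} (hn₀ : 1 ≤ n₀)
    (hiso : ∀ n : ℕ, n₀ ≤ n → c / (n : ℝ) ^ β ≤ isop G n) {A : Set V} (hA : A.Finite)
    (hne : A.Nonempty) : c / (n₀ : ℝ) ^ β / (A.ncard : ℝ) ^ β ≤ ratio G A := by
  have ha := (Set.ncard_pos hA).2 hne
  have hk : max A.ncard n₀ ≤ n₀ * A.ncard :=
    max_le (Nat.le_mul_of_pos_left _ hn₀) (Nat.le_mul_of_pos_right _ ha)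
  calc c / (n₀ : ℝ) ^ β / (A.ncard : ℝ) ^ β = c / ((n₀ * A.ncard : ℕ) : ℝ) ^ β := by
        rw [div_div, Nat.cast_mul, mul_rpow (by positivity) (by positivity)]
    _ ≤ c / (max A.ncard n₀ : ℕ) ^ β := by gcongr
    _ ≤ isop G (max A.ncard n₀) := hiso _ (le_max_right _ _)
    _ ≤ ratio G A := isop_le_ratio hA hne (le_max_left _ _)

lemma le_one_of_isop_le_div_rpow [Nonempty V]
    (hbd : ∀ A : Set V, A.Finite → A.Nonempty → 1 ≤ (ebd G A).ncard) {C β : ℝ} {n₀ : ℕ}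
    (h : ∀ n : ℕ, n₀ ≤ n → isop G n ≤ C / (n : ℝ) ^ β) : β ≤ 1 := by
  by_contra! hβ
  have hlarge : ∀ᶠ n : ℕ in atTop, C < (n : ℝ) ^ (β - 1) :=
    ((tendsto_rpow_atTop (by linarith)).comp tendsto_natCast_atTop_atTop).eventually_gt_atTop C
  obtain ⟨n, hnC, hn₀, hn1⟩ :=
    (hlarge.and ((eventually_ge_atTop n₀).and (eventually_ge_atTop 1))).exists
  have hn : (0 : ℝ) < n := by exact_mod_cast hn1
  have hle := (inv_le_isop hbd hn1).trans (h n hn₀)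
  rw [le_div_iff₀ (rpow_pos_of_pos hn β), inv_mul_eq_div] at hle
  rw [rpow_sub_one hn.ne'] at hnC
  linarith

lemma div_rpow_mul_rpow_half {x : ℝ} (hx : 0 < x) (C β : ℝ) :
    C / x ^ β * x ^ (β / 2) = C / x ^ (β / 2) := by
  rw [div_mul_eq_mul_div, div_eq_div_iff (by positivity) (by positivity), mul_assoc,
    ← rpow_add hx]
  ring_nf

lemma rpow_mul_le_of_div_rpow_le {c C x y γ : ℝ} (hc : 0 < c) (hC : 0 < C) (hx : 0 < x)
    (hy : 0 < y) (hγ : 0 < γ) (h : c / x ^ γ ≤ C / y ^ γ) : (c / C) ^ (1 / γ) * y ≤ x := by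
  rw [div_le_div_iff₀ (by positivity) (by positivity)] at h
  refine (rpow_le_rpow_iff (by positivity) hx.le hγ).1 ?_
  rw [mul_rpow (by positivity) hy.le, ← rpow_mul (by positivity), one_div_mul_cancel hγ.ne',
    rpow_one, div_mul_eq_mul_div, div_le_iff₀ hC]
  linarith

lemma mul_rpow_le_sep [Nonempty V] {c C β : ℝ} (hc : 0 < c) (hC : 0 < C) (hβ0 : 0 < β)
    (hβ1 : β ≤ 1) (hlow : ∀ A : Set V, A.Finite → A.Nonempty → c / (A.ncard : ℝ) ^ β ≤ ratio G A)
    {M : ℕ} (hM : 2 ≤ (c / C) ^ (2 / β) * M) (hup : isop G M ≤ C / (M : ℝ) ^ β) :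
    β / 4 * c * ((c / C) ^ (2 / β) * M) ^ (1 - β) ≤ sep G M := by
  have hMpos : (0 : ℝ) < M :=
    pos_of_mul_pos_right (show 0 < (c / C) ^ (2 / β) * M by linarith) (by positivity)
  have hM1 : 1 ≤ M := Nat.cast_pos.1 hMpos
  obtain ⟨F, hF, hne, hFM, hmin⟩ := exists_weightedRatio_le G (σ := 1 - β / 2) (by linarith) hM1
  have hm := (Set.ncard_pos hF).2 hne
  have hmR : (0 : ℝ) < F.ncard := by exact_mod_cast hm
  have hwF : weightedRatio G (1 - β / 2) F = ratio G F * (F.ncard : ℝ) ^ (β / 2) := by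
    rw [weightedRatio_eq_ratio_mul hm, sub_sub_cancel]
  have hupF : weightedRatio G (1 - β / 2) F ≤ C / (M : ℝ) ^ (β / 2) := by
    refine (weightedRatio_le_isop_mul_rpow (by linarith) hM1 hmin).trans ?_
    rw [sub_sub_cancel, ← div_rpow_mul_rpow_half hMpos]
    gcongr
  have hlowF : c / (F.ncard : ℝ) ^ (β / 2) ≤ weightedRatio G (1 - β / 2) F := by
    rw [hwF, ← div_rpow_mul_rpow_half hmR]
    gcongr
    exact hlow F hF hne
  have hFlarge : (c / C) ^ (2 / β) * M ≤ F.ncard := by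
    simpa only [one_div_div] using
      rpow_mul_le_of_div_rpow_le hc hC hmR hMpos (half_pos hβ0) (hlowF.trans hupF)
  have hcheeger := one_sub_div_two_mul_ncard_ebd_le (by linarith) (by linarith)
    (fun B hBF hB => hmin B (hF.subset hBF) hB ((Set.ncard_le_ncard hBF hF).trans hFM)) hF
    (by exact_mod_cast hM.trans hFlarge)
    fun B hBF hB => ebd_finite_of_ratio_pos
      (ratio_pos_of_forall_div_rpow_le hc hlow (hF.subset hBF) hB)
  have hebd : c * (F.ncard : ℝ) ^ (1 - β) ≤ (ebd G F).ncard := by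
    have := hlow F hF hne
    rw [ratio, div_le_div_iff₀ (rpow_pos_of_pos hmR β) hmR] at this
    rw [rpow_sub hmR, rpow_one, mul_div_assoc', div_le_iff₀ (rpow_pos_of_pos hmR β)]
    linarith
  calc β / 4 * c * ((c / C) ^ (2 / β) * M) ^ (1 - β)
      ≤ β / 4 * c * (F.ncard : ℝ) ^ (1 - β) := by gcongr
    _ ≤ β / 4 * (ebd G F).ncard := by rw [mul_assoc]; gcongr
    _ = (1 - (1 - β / 2)) / 2 * (ebd G F).ncard := by ring
    _ ≤ F.ncard * cheeger G F := hcheeger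
    _ ≤ sep G M := le_sep hF hFM

lemma exists_eventually_mul_rpow_le_sep {C₁ C₂ β : ℝ} (hC₁ : 0 < C₁) (hC₂ : 0 < C₂)
    (hβ : 0 < β) {n₀ : ℕ} (hiso : ∀ n : ℕ, n₀ ≤ n →
      C₁ / (n : ℝ) ^ β ≤ isop G n ∧ isop G n ≤ C₂ / (n : ℝ) ^ β) :
    ∃ A > (0 : ℝ), ∀ᶠ n : ℕ in atTop, A * (n : ℝ) ^ (1 - β) ≤ sep G n := by
  set N₀ := max n₀ 1
  have hN₀ : 1 ≤ N₀ := le_max_right _ _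
  have hisoN₀ : ∀ n : ℕ, N₀ ≤ n → C₁ / (n : ℝ) ^ β ≤ isop G n :=
    fun n hn => (hiso n ((le_max_left _ _).trans hn)).1
  have hc : 0 < C₁ / (N₀ : ℝ) ^ β := div_pos hC₁ (rpow_pos_of_pos (by exact_mod_cast hN₀) β)
  have : Nonempty V := nonempty_of_isop_pos (hc.trans_le (hisoN₀ N₀ le_rfl))
  set c := C₁ / (N₀ : ℝ) ^ β
  have hlow : ∀ A : Set V, A.Finite → A.Nonempty → c / (A.ncard : ℝ) ^ β ≤ ratio G A :=
    fun A => div_rpow_div_rpow_le_ratio hC₁.le hβ.le hN₀ hisoN₀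
  have hβ1 : β ≤ 1 := le_one_of_isop_le_div_rpow
    (fun A hA hne => one_le_ncard_ebd_of_ratio_pos (ratio_pos_of_forall_div_rpow_le hc hlow hA hne))
    fun n hn => (hiso n hn).2
  set κ := (c / C₂) ^ (2 / β)
  refine ⟨β / 4 * c * κ ^ (1 - β), by positivity, ?_⟩
  filter_upwards [(tendsto_natCast_atTop_atTop.const_mul_atTop (by positivity : 0 < κ)
    ).eventually_ge_atTop 2, eventually_ge_atTop n₀] with n hκn hn
  rw [mul_assoc, ← mul_rpow (by positivity) (by positivity)]
  exact mul_rpow_le_sep hc hC₂ hβ hβ1 hlow hκn (hiso n hn).2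

end SepProfile

open SepProfile Real

theorem stmt9_general {V : Type*} (G : SimpleGraph V)
    (C₁ C₂ β : ℝ) (hC₁ : 0 < C₁) (hC₂ : 0 < C₂) (hβ : 0 < β)
    (n₀ : ℕ)
    (hiso : ∀ n : ℕ, n₀ ≤ n →
      C₁ / (n : ℝ) ^ β ≤ isop G n ∧ isop G n ≤ C₂ / (n : ℝ) ^ β) :
    (∃ A > (0:ℝ), ∃ n₁ : ℕ, ∀ n : ℕ, n₁ ≤ n →
        A * isop G n ≤ sep G n / (n : ℝ)) ∧
    (∃ A' > (0:ℝ), ∃ n₂ : ℕ, ∀ n : ℕ, n₂ ≤ n →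
        A' * (n : ℝ) ^ (1 - β) ≤ sep G n) := by
  obtain ⟨A', hA', hsep⟩ := exists_eventually_mul_rpow_le_sep hC₁ hC₂ hβ hiso
  obtain ⟨n₂, hn₂⟩ := eventually_atTop.1 (hsep.and (eventually_ge_atTop (max n₀ 1)))
  refine ⟨⟨A' / C₂, div_pos hA' hC₂, n₂, fun n hn => ?_⟩, ⟨A', hA', n₂, fun n hn => (hn₂ n hn).1⟩⟩
  obtain ⟨hsepn, hn⟩ := hn₂ n hn
  have hnR : (0 : ℝ) < n := by exact_mod_cast (le_max_right _ _).trans hn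
  calc A' / C₂ * isop G n ≤ A' / C₂ * (C₂ / (n : ℝ) ^ β) := by
        gcongr
        exact (hiso n ((le_max_left _ _).trans hn)).2
    _ = A' * (n : ℝ) ^ (1 - β) / n := by rw [rpow_sub hnR, rpow_one]; field_simp
    _ ≤ sep G n / n := by gcongr

theorem stmt9 {V : Type*} (G : SimpleGraph V) (D : ℕ) (hdeg : DegLE G D)
    (C₁ C₂ β : ℝ) (hC₁ : 0 < C₁) (hC₂ : 0 < C₂) (hβ : 0 < β)
    (n₀ : ℕ)
    (hiso : ∀ n : ℕ, n₀ ≤ n →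
      C₁ / (n : ℝ) ^ β ≤ isop G n ∧ isop G n ≤ C₂ / (n : ℝ) ^ β) :
    (∃ A > (0:ℝ), ∃ n₁ : ℕ, ∀ n : ℕ, n₁ ≤ n →
        A * isop G n ≤ sep G n / (n : ℝ)) ∧
    (∃ A' > (0:ℝ), ∃ n₂ : ℕ, ∀ n : ℕ, n₂ ≤ n →
        A' * (n : ℝ) ^ (1 - β) ≤ sep G n) :=
  stmt9_general G C₁ C₂ β hC₁ hC₂ hβ n₀ hiso
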